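/- Let γ ∈ (0,1/2) and α ∈ (0, 1−2γ), and define C_{γ,α} = ∫_ℝ (|z|^{−α}−1)/|1−z|^{1+2γ} dz (an absolutely convergent integral). Then: (i) C_{γ,α} = ∫_{−1}^{1} (|z|^{−α}−1)(1−|z|^{−1+2γ+α}) / |1−z|^{1+2γ} dz; (ii) C_{γ,α} < 0; (iii) the map α ↦ C_{γ,α} is strictly decreasing on (0, (1−2γ)/2) and strictly increasing on ((1−2γ)/2, 1−2γ). -/

import Mathlib

open MeasureTheory Real

open Set

noncomputable def stf (γ α : ℝ) (z : ℝ) : ℝ := (|z| ^ (-α) - 1) / |1 - z| ^ (1 + 2 * γ)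

lemma stf_meas (γ α : ℝ) : Measurable (stf γ α) := by
  unfold stf; fun_prop

variable {γ α : ℝ}

/-- far-field pointwise bound -/
lemma stf_bound_far (hγ1 : 0 < γ) (hα1 : 0 < α) {z w : ℝ} (hz : 2 ≤ z) (hw : 1 ≤ |w|)
    (hzw : z / 2 ≤ |1 - w|) : ‖stf γ α w‖ ≤ 2 ^ (1 + 2 * γ) * z ^ (-(1 + 2 * γ)) := by
  have hz0 : (0:ℝ) < z := by linarith
  have hnum : |(|w| ^ (-α) - 1)| ≤ 1 := by
    have h0 : 0 ≤ |w| ^ (-α) := rpow_nonneg (abs_nonneg w) _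
    have h1 : |w| ^ (-α) ≤ 1 := rpow_le_one_of_one_le_of_nonpos hw (by linarith)
    rw [abs_le]; constructor <;> linarith
  have hden : (z / 2) ^ (1 + 2 * γ) ≤ |1 - w| ^ (1 + 2 * γ) :=
    rpow_le_rpow (by linarith) hzw (by linarith)
  have hdpos : (0:ℝ) < (z / 2) ^ (1 + 2 * γ) := rpow_pos_of_pos (by linarith) _
  have key : ‖stf γ α w‖ ≤ 1 / (z / 2) ^ (1 + 2 * γ) := by
    rw [stf, Real.norm_eq_abs, abs_div, abs_of_nonneg (rpow_nonneg (abs_nonneg _) _)]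
    exact div_le_div₀ (by norm_num) hnum hdpos hden
  refine key.trans (le_of_eq ?_)
  rw [div_rpow (by linarith) (by norm_num : (0:ℝ) ≤ 2), rpow_neg hz0.le, one_div, inv_div,
    div_eq_mul_inv]

lemma stf_integrable (hγ1 : 0 < γ) (hγ2 : γ < 1/2) (hα1 : 0 < α) (hα2 : α < 1 - 2*γ) :
    Integrable (stf γ α) := by
  have hα' : α < 1 := by linarith
  -- far field bound integrable
  have hbdint : IntegrableOn (fun z : ℝ => 2 ^ (1 + 2*γ) * z ^ (-(1 + 2*γ))) (Ioi 2) :=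
    (integrableOn_Ioi_rpow_of_lt (by linarith) (by norm_num : (0:ℝ) < 2)).const_mul _
  have hIoi : IntegrableOn (stf γ α) (Ioi 2) := by
    refine Integrable.mono' hbdint (stf_meas γ α).aestronglyMeasurable.restrict ?_
    filter_upwards [ae_restrict_mem measurableSet_Ioi] with z hz
    have hz2 : (2:ℝ) ≤ z := (mem_Ioi.mp hz).le
    exact stf_bound_far hγ1 hα1 hz2 (by rw [abs_of_pos (by linarith)]; linarith)
      (by rw [abs_of_nonpos (by linarith)]; linarith)
  have hIic : IntegrableOn (stf γ α) (Iic (-2)) := by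
    rw [← (Measure.measurePreserving_neg (volume : Measure ℝ)).integrableOn_comp_preimage
        (Homeomorph.neg ℝ).measurableEmbedding]
    have hpre : (Neg.neg ⁻¹' Iic (-2 : ℝ)) = Ici 2 := by ext x; simp
    rw [hpre]
    have : IntegrableOn (fun z : ℝ => 2 ^ (1 + 2*γ) * z ^ (-(1 + 2*γ))) (Ici 2) := by
      rwa [integrableOn_Ici_iff_integrableOn_Ioi]
    refine Integrable.mono' this ((stf_meas γ α).comp measurable_neg).aestronglyMeasurable.restrict ?_
    filter_upwards [ae_restrict_mem measurableSet_Ici] with z hz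
    have hz2 : (2:ℝ) ≤ z := mem_Ici.mp hz
    exact stf_bound_far hγ1 hα1 hz2 (by rw [abs_of_nonpos (by linarith)]; linarith)
      (by rw [sub_neg_eq_add, abs_of_pos (by linarith)]; linarith)
  -- middle piece 1 : Ioc (-2) (1/2)
  have habs : IntegrableOn (fun z : ℝ => |z| ^ (-α)) (Ioc (-2 : ℝ) (1/2)) := by
    have hsplit : Ioc (-2:ℝ) (1/2) = Ioc (-2) 0 ∪ Ioc 0 (1/2) :=
      (Ioc_union_Ioc_eq_Ioc (by norm_num) (by norm_num)).symm
    rw [hsplit, integrableOn_union]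
    constructor
    · have h1 : IntervalIntegrable (fun x : ℝ => x ^ (-α)) volume 0 2 :=
        intervalIntegral.intervalIntegrable_rpow' (by linarith)
      have h2 : IntervalIntegrable (fun x : ℝ => (-x) ^ (-α)) volume 0 (-2) := by
        simpa using (IntervalIntegrable.iff_comp_neg (by simp)).mp h1
      have h2' : IntegrableOn (fun x : ℝ => (-x) ^ (-α)) (Ioc (-2) 0) :=
        (intervalIntegrable_iff_integrableOn_Ioc_of_le (by norm_num)).mp h2.symm
      exact h2'.congr_fun (fun x hx => by rw [abs_of_nonpos hx.2]) measurableSet_Ioc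
    · have h1 : IntervalIntegrable (fun x : ℝ => x ^ (-α)) volume 0 (1/2) :=
        intervalIntegral.intervalIntegrable_rpow' (by linarith)
      have h1' : IntegrableOn (fun x : ℝ => x ^ (-α)) (Ioc 0 (1/2)) :=
        (intervalIntegrable_iff_integrableOn_Ioc_of_le (by norm_num)).mp h1
      exact h1'.congr_fun (fun x hx => by rw [abs_of_pos hx.1]) measurableSet_Ioc
  have hmid1 : IntegrableOn (stf γ α) (Ioc (-2 : ℝ) (1/2)) := by
    have hbd : IntegrableOn (fun z : ℝ => 2 ^ (1 + 2*γ) * (|z| ^ (-α) + 1)) (Ioc (-2:ℝ) (1/2)) :=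
      ((habs.add ((integrableOn_const_iff (by simp)).mpr (Or.inr measure_Ioc_lt_top))).const_mul _)
    refine Integrable.mono' hbd (stf_meas γ α).aestronglyMeasurable.restrict ?_
    filter_upwards [ae_restrict_mem measurableSet_Ioc] with z hz
    obtain ⟨hz1, hz2⟩ := hz
    have h0 : 0 ≤ |z| ^ (-α) := rpow_nonneg (abs_nonneg z) _
    have hnum : |(|z| ^ (-α) - 1)| ≤ |z| ^ (-α) + 1 := by
      rw [abs_le]; constructor <;> linarith
    have hd : (1/2 : ℝ) ≤ |1 - z| := by rw [abs_of_pos (by linarith)]; linarith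
    have hden : ((1:ℝ)/2) ^ (1 + 2*γ) ≤ |1 - z| ^ (1 + 2*γ) :=
      rpow_le_rpow (by norm_num) hd (by linarith)
    have hdpos : (0:ℝ) < ((1:ℝ)/2) ^ (1 + 2*γ) := rpow_pos_of_pos (by norm_num) _
    have key : ‖stf γ α z‖ ≤ (|z| ^ (-α) + 1) / ((1:ℝ)/2) ^ (1 + 2*γ) := by
      rw [stf, Real.norm_eq_abs, abs_div, abs_of_nonneg (rpow_nonneg (abs_nonneg _) _)]
      exact div_le_div₀ (by positivity) hnum hdpos hden
    refine key.trans (le_of_eq ?_)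
    rw [show ((1:ℝ)/2) = 2⁻¹ by norm_num, inv_rpow (by norm_num : (0:ℝ) ≤ 2),
      div_eq_mul_inv, inv_inv, mul_comm]
  -- middle piece 2 : Ioc (1/2) 2, MVT near 1
  have hMVT : ∀ z ∈ Icc (1/2 : ℝ) 2, |z ^ (-α) - 1| ≤ 4 * |z - 1| := by
    have hder : ∀ x ∈ Icc (1/2:ℝ) 2,
        HasDerivWithinAt (fun t : ℝ => t ^ (-α)) ((-α) * x ^ (-α - 1)) (Icc (1/2) 2) x :=
      fun x hx => (Real.hasDerivAt_rpow_const (Or.inl (by have := hx.1; positivity))).hasDerivWithinAt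
    have hbd : ∀ x ∈ Icc (1/2:ℝ) 2, ‖(-α) * x ^ (-α - 1)‖ ≤ 4 := by
      intro x hx
      have hx0 : (0:ℝ) < x := by have := hx.1; linarith
      have h1 : x ^ (-α - 1) ≤ ((1:ℝ)/2) ^ (-α - 1) :=
        rpow_le_rpow_of_nonpos (by norm_num) hx.1 (by linarith)
      have h2 : ((1:ℝ)/2) ^ (-α - 1) = 2 ^ (α + 1) := by
        rw [show ((1:ℝ)/2) = 2⁻¹ by norm_num, inv_rpow (by norm_num : (0:ℝ) ≤ 2),
          ← rpow_neg (by norm_num : (0:ℝ) ≤ 2)]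
        norm_num
        congr 1
        ring
      have h3 : (2:ℝ) ^ (α + 1) ≤ 2 ^ (2:ℝ) :=
        rpow_le_rpow_of_exponent_le (by norm_num) (by linarith)
      have h4 : (2:ℝ) ^ (2:ℝ) = 4 := by
        rw [show (2:ℝ) = ((2:ℕ):ℝ) from by norm_num, rpow_natCast]; norm_num
      have h5 : 0 ≤ x ^ (-α - 1) := rpow_nonneg hx0.le _
      rw [norm_mul, Real.norm_eq_abs, Real.norm_eq_abs, abs_neg, abs_of_pos hα1,
        abs_of_nonneg h5]
      calc α * x ^ (-α - 1) ≤ 1 * (2 ^ (α+1)) := by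
            apply mul_le_mul hα'.le (by linarith [h1, h2]) h5 (by norm_num)
        _ ≤ 4 := by rw [one_mul]; linarith [h3, h4]
    intro z hz
    have := (convex_Icc (1/2:ℝ) 2).norm_image_sub_le_of_norm_hasDerivWithin_le hder hbd
      (by norm_num : (1:ℝ) ∈ Icc (1/2:ℝ) 2) hz
    simpa [Real.one_rpow] using this
  have hb2 : IntegrableOn (fun z : ℝ => |1 - z| ^ (-(2*γ))) (Ioc (1/2 : ℝ) 2) := by
    have hsplit : Ioc (1/2:ℝ) 2 = Ioc (1/2) 1 ∪ Ioc 1 2 :=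
      (Ioc_union_Ioc_eq_Ioc (by norm_num) (by norm_num)).symm
    rw [hsplit, integrableOn_union]
    constructor
    · have h1 : IntervalIntegrable (fun x : ℝ => x ^ (-(2*γ))) volume 0 (1/2) :=
        intervalIntegral.intervalIntegrable_rpow' (by linarith)
      have h2 := h1.comp_sub_left 1
      have h2' : IntegrableOn (fun z : ℝ => (1 - z) ^ (-(2*γ))) (Ioc (1/2) 1) := by
        refine (intervalIntegrable_iff_integrableOn_Ioc_of_le (by norm_num)).mp ?_
        have := h2.symm
        norm_num at this ⊢
        exact this
      exact h2'.congr_fun (fun x hx => by rw [abs_of_nonneg (by linarith [hx.2])]) measurableSet_Ioc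
    · have h1 : IntervalIntegrable (fun x : ℝ => x ^ (-(2*γ))) volume 0 1 :=
        intervalIntegral.intervalIntegrable_rpow' (by linarith)
      have h2 := h1.comp_sub_right 1
      have h2' : IntegrableOn (fun z : ℝ => (z - 1) ^ (-(2*γ))) (Ioc 1 2) := by
        refine (intervalIntegrable_iff_integrableOn_Ioc_of_le (by norm_num)).mp ?_
        have := h2
        norm_num at this ⊢
        exact this
      exact h2'.congr_fun (fun x hx => by
        rw [abs_of_nonpos (by linarith [hx.1] : (1:ℝ) - x ≤ 0), neg_sub]) measurableSet_Ioc
  have hmid2 : IntegrableOn (stf γ α) (Ioc (1/2 : ℝ) 2) := by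
    refine Integrable.mono' (hb2.const_mul 4) (stf_meas γ α).aestronglyMeasurable.restrict ?_
    filter_upwards [ae_restrict_mem measurableSet_Ioc] with z hz
    obtain ⟨hz1, hz2⟩ := hz
    have hz0 : (0:ℝ) < z := by linarith
    have hnum : |(|z| ^ (-α) - 1)| ≤ 4 * |z - 1| := by
      rw [abs_of_pos hz0]; exact hMVT z ⟨hz1.le, hz2⟩
    rcases eq_or_ne z 1 with rfl | hz3
    · have hne : -(2*γ) ≠ 0 := ne_of_lt (by linarith)
      simp [stf, zero_rpow hne]
    · have hD : 0 < |1 - z| := abs_pos.mpr (sub_ne_zero_of_ne (Ne.symm hz3))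
      have hDp : 0 < |1 - z| ^ (1 + 2*γ) := rpow_pos_of_pos hD _
      have key : ‖stf γ α z‖ ≤ 4 * |1 - z| / |1 - z| ^ (1 + 2*γ) := by
        rw [stf, Real.norm_eq_abs, abs_div, abs_of_nonneg (rpow_nonneg (abs_nonneg _) _)]
        exact div_le_div₀ (by positivity) (by rw [abs_sub_comm (1:ℝ) z]; exact hnum) hDp le_rfl
      refine key.trans (le_of_eq ?_)
      rw [mul_div_assoc]
      congr 1
      rw [show |1 - z| / |1 - z| ^ (1 + 2*γ) = |1-z| ^ ((1:ℝ) - (1 + 2*γ)) from ?_]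
      · congr 1; ring
      · rw [rpow_sub hD, rpow_one]
  -- assemble
  rw [← integrableOn_univ, show (univ : Set ℝ)
      = Iic (-2) ∪ Ioc (-2) (1/2) ∪ Ioc (1/2) 2 ∪ Ioi 2 from ?_]
  · exact ((hIic.union hmid1).union hmid2).union hIoi
  · rw [Iic_union_Ioc_eq_Iic (by norm_num : (-2:ℝ) ≤ 1/2),
      Iic_union_Ioc_eq_Iic (by norm_num : (1/2:ℝ) ≤ 2), Iic_union_Ioi]

noncomputable def stg (γ α : ℝ) (z : ℝ) : ℝ :=
  (|z| ^ (-α) - 1) * (1 - |z| ^ (-1 + 2 * γ + α)) / |1 - z| ^ (1 + 2 * γ)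

lemma image_inv_pos : (fun w : ℝ => w⁻¹) '' Ioo 0 1 = Ioi 1 := by
  ext y
  simp only [mem_image, mem_Ioo, mem_Ioi]
  constructor
  · rintro ⟨w, ⟨h0, h1⟩, rfl⟩
    have := mul_inv_cancel₀ h0.ne'
    nlinarith [inv_pos.mpr h0]
  · intro hy
    have hy0 : 0 < y := by linarith
    refine ⟨y⁻¹, ⟨inv_pos.mpr hy0, ?_⟩, inv_inv y⟩
    have := mul_inv_cancel₀ hy0.ne'
    nlinarith [inv_pos.mpr hy0]

lemma image_inv_neg : (fun w : ℝ => w⁻¹) '' Ioo (-1) 0 = Iio (-1) := by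
  ext y
  simp only [mem_image, mem_Ioo, mem_Iio]
  constructor
  · rintro ⟨w, ⟨h1, h0⟩, rfl⟩
    have := mul_inv_cancel₀ h0.ne
    have hwi : w⁻¹ < 0 := inv_neg''.mpr h0
    nlinarith
  · intro hy
    have hy0 : y < 0 := by linarith
    have hyi : y⁻¹ < 0 := inv_neg''.mpr hy0
    have := mul_inv_cancel₀ hy0.ne
    refine ⟨y⁻¹, ⟨?_, hyi⟩, inv_inv y⟩
    nlinarith

lemma stg_zero (hγ1 : 0 < γ) (hα1 : 0 < α) (hα2 : α < 1 - 2*γ) : stg γ α 0 = -1 := by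
  have h1 : -α ≠ 0 := ne_of_lt (by linarith)
  have h2 : -1 + 2*γ + α ≠ 0 := ne_of_lt (by linarith)
  simp [stg, zero_rpow h1, zero_rpow h2]

lemma key_pointwise (hγ1 : 0 < γ) (hγ2 : γ < 1/2) (hα1 : 0 < α) (hα2 : α < 1 - 2*γ) :
    ∀ w ∈ Ioo (-1:ℝ) 1, stf γ α w + |(-(w^2)⁻¹)| • stf γ α w⁻¹ = stg γ α w := by
  intro w hw
  rcases eq_or_ne w 0 with rfl | hw0
  · have h1 : -α ≠ 0 := ne_of_lt (by linarith)
    simp [stf, stg_zero hγ1 hα1 hα2, zero_rpow h1,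
      zero_rpow (ne_of_lt (by linarith : -1 + 2*γ + α < 0))]
  · have hr0 : 0 < |w| := abs_pos.mpr hw0
    have hr1 : |w| < 1 := abs_lt.mpr ⟨hw.1, hw.2⟩
    have hD : 0 < |1 - w| := abs_pos.mpr (sub_ne_zero_of_ne (ne_of_gt hw.2))
    have e1 : |w⁻¹| = |w|⁻¹ := abs_inv w
    have e2 : |1 - w⁻¹| = |1 - w| / |w| := by
      have h : 1 - w⁻¹ = (w - 1) / w := by field_simp
      rw [h, abs_div, abs_sub_comm]
    rw [stf, stf, stg, smul_eq_mul, e1, e2]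
    have hinv : (|w|⁻¹) ^ (-α) = |w| ^ α := by
      rw [inv_rpow (abs_nonneg w), ← rpow_neg (abs_nonneg w), neg_neg]
    have hdiv : (|1 - w| / |w|) ^ (1 + 2*γ) = |1 - w| ^ (1 + 2*γ) / |w| ^ (1 + 2*γ) :=
      div_rpow (abs_nonneg _) (abs_nonneg w) _
    rw [hinv, hdiv, abs_neg, abs_inv, abs_pow]
    have hDp : 0 < |1 - w| ^ (1 + 2*γ) := rpow_pos_of_pos hD _
    have hrp : 0 < |w| ^ (1 + 2*γ) := rpow_pos_of_pos hr0 _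
    have hr2 : (0:ℝ) < |w|^(2:ℕ) := pow_pos hr0 2
    have k1 : |w| ^ (-1 + 2*γ + α) = |w| ^ (2*γ - 1) * |w| ^ α := by
      rw [← rpow_add hr0]; ring_nf
    have k2 : |w| ^ (-α) * |w| ^ α = 1 := by
      rw [← rpow_add hr0]; simp
    have k3 : |w| ^ (1 + 2*γ) = |w| ^ (2*γ - 1) * |w|^(2:ℕ) := by
      rw [← rpow_natCast |w| 2, ← rpow_add hr0]; ring_nf
    have t2 : (|w|^(2:ℕ))⁻¹ * ((|w| ^ α - 1) / (|1 - w| ^ (1 + 2*γ) / |w| ^ (1 + 2*γ)))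
        = (|w| ^ α - 1) * |w| ^ (2*γ - 1) / |1 - w| ^ (1 + 2*γ) := by
      rw [div_div_eq_mul_div, k3]
      field_simp
    rw [t2, ← add_div]
    congr 1
    rw [k1]
    linear_combination (|w| ^ (2*γ - 1)) * k2

lemma rep_and_int (hγ1 : 0 < γ) (hγ2 : γ < 1/2) (hα1 : 0 < α) (hα2 : α < 1 - 2*γ) :
    IntegrableOn (stg γ α) (Ioo (-1:ℝ) 1) ∧
    (∫ z, stf γ α z) = ∫ z in Ioo (-1:ℝ) 1, stg γ α z := by
  have hI := stf_integrable hγ1 hγ2 hα1 hα2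
  set h : ℝ → ℝ := fun w => |(-(w^2)⁻¹)| • stf γ α w⁻¹ with hh
  -- change of variables on the two outer pieces
  have hder1 : ∀ x ∈ Ioo (0:ℝ) 1, HasDerivWithinAt (fun w : ℝ => w⁻¹) (-(x^2)⁻¹) (Ioo 0 1) x :=
    fun x hx => (hasDerivAt_inv (ne_of_gt hx.1)).hasDerivWithinAt
  have hder2 : ∀ x ∈ Ioo (-1:ℝ) 0, HasDerivWithinAt (fun w : ℝ => w⁻¹) (-(x^2)⁻¹) (Ioo (-1) 0) x :=
    fun x hx => (hasDerivAt_inv (ne_of_lt hx.2)).hasDerivWithinAt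
  have hinj1 : InjOn (fun w : ℝ => w⁻¹) (Ioo 0 1) := inv_injective.injOn
  have hinj2 : InjOn (fun w : ℝ => w⁻¹) (Ioo (-1) 0) := inv_injective.injOn
  have hcov1 : ∫ z in Ioi (1:ℝ), stf γ α z = ∫ w in Ioo (0:ℝ) 1, h w := by
    rw [← image_inv_pos, integral_image_eq_integral_abs_deriv_smul measurableSet_Ioo hder1 hinj1]
  have hcov2 : ∫ z in Iio (-1:ℝ), stf γ α z = ∫ w in Ioo (-1:ℝ) 0, h w := by
    rw [← image_inv_neg, integral_image_eq_integral_abs_deriv_smul measurableSet_Ioo hder2 hinj2]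
  have hcov1' : IntegrableOn h (Ioo (0:ℝ) 1) := by
    rw [← integrableOn_image_iff_integrableOn_abs_deriv_smul measurableSet_Ioo hder1 hinj1,
      image_inv_pos]
    exact hI.integrableOn
  have hcov2' : IntegrableOn h (Ioo (-1:ℝ) 0) := by
    rw [← integrableOn_image_iff_integrableOn_abs_deriv_smul measurableSet_Ioo hder2 hinj2,
      image_inv_neg]
    exact hI.integrableOn
  -- the middle interval equals its version with 0 removed
  have hm : (Ioo (-1:ℝ) 1 : Set ℝ) =ᵐ[volume] ((Ioo (-1:ℝ) 0 ∪ Ioo 0 1 : Set ℝ)) := by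
    rw [MeasureTheory.ae_eq_set]
    constructor
    · refine measure_mono_null ?_ (measure_singleton (0:ℝ))
      intro x hx
      simp only [mem_diff, mem_Ioo, mem_union, not_or] at hx
      obtain ⟨⟨h1, h2⟩, h3, h4⟩ := hx
      simp only [mem_singleton_iff]
      by_contra hne
      rcases lt_or_gt_of_ne hne with hlt | hgt
      · exact h3 ⟨h1, hlt⟩
      · exact h4 ⟨hgt, h2⟩
    · have he : (Ioo (-1:ℝ) 0 ∪ Ioo 0 1) \ Ioo (-1) 1 = ∅ := by
        rw [diff_eq_empty]
        rintro x (⟨a, b⟩ | ⟨a, b⟩) <;> exact ⟨by linarith, by linarith⟩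
      rw [he, measure_empty]
  have hdisj0 : Disjoint (Ioo (-1:ℝ) 0) (Ioo (0:ℝ) 1) := by
    rw [Set.disjoint_left]
    rintro x ⟨_, h2⟩ ⟨h3, _⟩
    linarith
  have hint_h : IntegrableOn h (Ioo (-1:ℝ) 1) := by
    rw [IntegrableOn, Measure.restrict_congr_set hm]
    exact integrableOn_union.mpr ⟨hcov2', hcov1'⟩
  have hint_g : IntegrableOn (stg γ α) (Ioo (-1:ℝ) 1) := by
    have hadd : IntegrableOn (fun z => stf γ α z + h z) (Ioo (-1:ℝ) 1) :=
      hI.integrableOn.add hint_h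
    exact hadd.congr_fun (key_pointwise hγ1 hγ2 hα1 hα2) measurableSet_Ioo
  refine ⟨hint_g, ?_⟩
  -- split the full integral
  have hnull : volume ({-1, 1} : Set ℝ) = 0 :=
    ((Set.finite_singleton (1:ℝ)).insert (-1)).countable.measure_zero volume
  have huniv : ((Iio (-1) ∪ Ioo (-1) 1 ∪ Ioi 1 : Set ℝ)) =ᵐ[volume] (univ : Set ℝ) := by
    rw [ae_eq_univ]
    refine measure_mono_null ?_ hnull
    intro x hx
    simp only [mem_compl_iff, mem_union, mem_Iio, mem_Ioo, mem_Ioi, not_or, not_lt, not_and] at hx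
    obtain ⟨⟨h1, h2⟩, h3⟩ := hx
    simp only [mem_insert_iff, mem_singleton_iff]
    rcases eq_or_lt_of_le h1 with heq | hlt
    · exact Or.inl heq.symm
    · exact Or.inr (le_antisymm h3 (h2 hlt))
  have hdisj1 : Disjoint (Iio (-1:ℝ)) (Ioo (-1:ℝ) 1) := by
    rw [Set.disjoint_left]
    rintro x hx ⟨h1, _⟩
    exact absurd hx (not_lt.mpr h1.le)
  have hdisj2 : Disjoint (Iio (-1:ℝ) ∪ Ioo (-1:ℝ) 1) (Ioi (1:ℝ)) := by
    rw [Set.disjoint_left]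
    rintro x (hx | ⟨_, hx⟩) h1
    · have := mem_Iio.mp hx; have := mem_Ioi.mp h1; linarith
    · exact absurd h1 (not_lt.mpr hx.le)
  have i1 : IntegrableOn (stf γ α) (Iio (-1:ℝ)) := hI.integrableOn
  have i2 : IntegrableOn (stf γ α) (Ioo (-1:ℝ) 1) := hI.integrableOn
  have i3 : IntegrableOn (stf γ α) (Ioi (1:ℝ)) := hI.integrableOn
  have hsplit : (∫ z, stf γ α z)
      = (∫ z in Iio (-1:ℝ), stf γ α z) + (∫ z in Ioo (-1:ℝ) 1, stf γ α z)
        + (∫ z in Ioi (1:ℝ), stf γ α z) := by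
    calc (∫ z, stf γ α z) = ∫ z in (univ : Set ℝ), stf γ α z := setIntegral_univ.symm
      _ = ∫ z in (Iio (-1) ∪ Ioo (-1) 1 ∪ Ioi 1 : Set ℝ), stf γ α z :=
          (setIntegral_congr_set huniv).symm
      _ = _ := by
          rw [setIntegral_union hdisj2 measurableSet_Ioi (i1.union i2) i3,
            setIntegral_union hdisj1 measurableSet_Ioo i1 i2]
  have hsum : (∫ w in Iio (-1:ℝ), stf γ α w) + (∫ w in Ioi (1:ℝ), stf γ α w)
      = ∫ w in Ioo (-1:ℝ) 1, h w := by
    rw [hcov1, hcov2, setIntegral_congr_set hm,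
      setIntegral_union hdisj0 measurableSet_Ioo hcov2' hcov1']
  have hmerge : (∫ w in Ioo (-1:ℝ) 1, stf γ α w) + (∫ w in Ioo (-1:ℝ) 1, h w)
      = ∫ w in Ioo (-1:ℝ) 1, stg γ α w := by
    rw [← integral_add hI.integrableOn hint_h]
    exact setIntegral_congr_fun measurableSet_Ioo (key_pointwise hγ1 hγ2 hα1 hα2)
  linarith [hsplit, hsum, hmerge]

lemma stg_neg (hγ1 : 0 < γ) (hγ2 : γ < 1/2) (hα1 : 0 < α) (hα2 : α < 1 - 2*γ) :
    ∀ w ∈ Ioo (-1:ℝ) 1, stg γ α w < 0 := by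
  intro w hw
  rcases eq_or_ne w 0 with rfl | hw0
  · rw [stg_zero hγ1 hα1 hα2]; norm_num
  · have hr0 : 0 < |w| := abs_pos.mpr hw0
    have hr1 : |w| < 1 := abs_lt.mpr ⟨hw.1, hw.2⟩
    have hD : 0 < |1 - w| := abs_pos.mpr (sub_ne_zero_of_ne (ne_of_gt hw.2))
    have hDp : 0 < |1 - w| ^ (1 + 2*γ) := rpow_pos_of_pos hD _
    have h1 : 1 < |w| ^ (-α) :=
      (one_lt_rpow_iff_of_pos hr0).mpr (Or.inr ⟨hr1, by linarith⟩)
    have h2 : 1 < |w| ^ (-1 + 2*γ + α) :=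
      (one_lt_rpow_iff_of_pos hr0).mpr (Or.inr ⟨hr1, by linarith⟩)
    exact div_neg_of_neg_of_pos (mul_neg_of_pos_of_neg (by linarith) (by linarith)) hDp

lemma stg_diff {α₁ α₂ : ℝ} : ∀ w ∈ Ioo (-1:ℝ) 1, w ≠ 0 →
    stg γ α₁ w - stg γ α₂ w
      = (|w| ^ (-α₁) - |w| ^ (-α₂)) * (1 - |w| ^ (-1 + 2*γ + α₁ + α₂)) / |1 - w| ^ (1 + 2*γ) := by
  intro w hw hw0
  have hr0 : 0 < |w| := abs_pos.mpr hw0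
  rw [stg, stg, div_sub_div_same]
  congr 1
  have kE1 : |w| ^ (-1 + 2*γ + α₁) = |w| ^ (-1 + 2*γ) * |w| ^ α₁ := by
    rw [← rpow_add hr0]
  have kE2 : |w| ^ (-1 + 2*γ + α₂) = |w| ^ (-1 + 2*γ) * |w| ^ α₂ := by
    rw [← rpow_add hr0]
  have kE12 : |w| ^ (-1 + 2*γ + α₁ + α₂) = |w| ^ (-1 + 2*γ) * |w| ^ α₁ * |w| ^ α₂ := by
    rw [← rpow_add hr0, ← rpow_add hr0]
  have kk1 : |w| ^ (-α₁) * |w| ^ α₁ = 1 := by rw [← rpow_add hr0]; simp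
  have kk2 : |w| ^ (-α₂) * |w| ^ α₂ = 1 := by rw [← rpow_add hr0]; simp
  rw [kE1, kE2, kE12]
  linear_combination (|w| ^ (-1 + 2*γ) * |w| ^ α₂ - |w| ^ (-1 + 2*γ)) * kk1
    + (|w| ^ (-1 + 2*γ) - |w| ^ (-1 + 2*γ) * |w| ^ α₁) * kk2

lemma key_lt (hγ1 : 0 < γ) (hγ2 : γ < 1/2) {α₁ α₂ : ℝ}
    (hb₁ : α₁ ∈ Ioo (0:ℝ) (1 - 2*γ)) (hb₂ : α₂ ∈ Ioo (0:ℝ) (1 - 2*γ))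
    (hlt : ∀ w ∈ Ioo (-1:ℝ) 1, w ≠ 0 → stg γ α₁ w < stg γ α₂ w) :
    (∫ z, stf γ α₁ z) < ∫ z, stf γ α₂ z := by
  obtain ⟨hint1, hrep1⟩ := rep_and_int hγ1 hγ2 hb₁.1 hb₁.2
  obtain ⟨hint2, hrep2⟩ := rep_and_int hγ1 hγ2 hb₂.1 hb₂.2
  rw [hrep1, hrep2]
  have hdiffint : IntegrableOn (fun w => stg γ α₂ w - stg γ α₁ w) (Ioo (-1:ℝ) 1) :=
    hint2.sub hint1
  have hnonneg : 0 ≤ᵐ[volume.restrict (Ioo (-1:ℝ) 1)] fun w => stg γ α₂ w - stg γ α₁ w := by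
    filter_upwards [ae_restrict_mem measurableSet_Ioo] with w hw
    rcases eq_or_ne w 0 with rfl | hw0
    · simp only [Pi.zero_apply, stg_zero hγ1 hb₁.1 hb₁.2, stg_zero hγ1 hb₂.1 hb₂.2,
        sub_self, le_refl]
    · have := hlt w hw hw0
      simp only [Pi.zero_apply]
      linarith
  have hpos : 0 < ∫ w in Ioo (-1:ℝ) 1, (stg γ α₂ w - stg γ α₁ w) := by
    rw [setIntegral_pos_iff_support_of_nonneg_ae hnonneg hdiffint]
    have h1 : (0 : ENNReal) < volume (Ioo (-1:ℝ) 1 \ {0}) := by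
      rw [measure_diff_null (measure_singleton (0:ℝ)), Real.volume_Ioo]
      norm_num
    have h2 : Ioo (-1:ℝ) 1 \ {0}
        ⊆ (Function.support fun w => stg γ α₂ w - stg γ α₁ w) ∩ Ioo (-1:ℝ) 1 := by
      intro x hx
      obtain ⟨hx1, hx2⟩ := hx
      refine ⟨?_, hx1⟩
      have := hlt x hx1 (by simpa using hx2)
      simp only [Function.mem_support]
      intro hc
      rw [sub_eq_zero] at hc
      exact absurd hc.symm (ne_of_lt this)
    exact lt_of_lt_of_le h1 (measure_mono h2)
  have := integral_sub hint2 hint1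
  rw [this] at hpos
  linarith

/-- Properties of the ground-state-representation constant
`C_{γ,α} = ∫_ℝ (|z|^{-α} - 1)/|1-z|^{1+2γ} dz` in dimension one:
an equivalent expression as an integral over `(-1,1)`, negativity, and
strict monotonicity in `α` on each side of `(1-2γ)/2`. -/
theorem stmt_4 (γ : ℝ) (hγ : γ ∈ Set.Ioo (0 : ℝ) (1 / 2)) :
    (∀ α ∈ Set.Ioo (0 : ℝ) (1 - 2 * γ),
      MeasureTheory.Integrable (fun z : ℝ => (|z| ^ (-α) - 1) / |1 - z| ^ (1 + 2 * γ))) ∧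
    (∀ α ∈ Set.Ioo (0 : ℝ) (1 - 2 * γ),
      (∫ z : ℝ, (|z| ^ (-α) - 1) / |1 - z| ^ (1 + 2 * γ)) =
        ∫ z in Set.Ioo (-1 : ℝ) 1,
          (|z| ^ (-α) - 1) * (1 - |z| ^ (-1 + 2 * γ + α)) / |1 - z| ^ (1 + 2 * γ)) ∧
    (∀ α ∈ Set.Ioo (0 : ℝ) (1 - 2 * γ),
      (∫ z : ℝ, (|z| ^ (-α) - 1) / |1 - z| ^ (1 + 2 * γ)) < 0) ∧
    StrictAntiOn (fun α : ℝ => ∫ z : ℝ, (|z| ^ (-α) - 1) / |1 - z| ^ (1 + 2 * γ))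
      (Set.Ioo 0 ((1 - 2 * γ) / 2)) ∧
    StrictMonoOn (fun α : ℝ => ∫ z : ℝ, (|z| ^ (-α) - 1) / |1 - z| ^ (1 + 2 * γ))
      (Set.Ioo ((1 - 2 * γ) / 2) (1 - 2 * γ)) := by
  obtain ⟨hγ1, hγ2⟩ := hγ
  refine ⟨?_, ?_, ?_, ?_, ?_⟩
  · exact fun α hα => stf_integrable hγ1 hγ2 hα.1 hα.2
  · exact fun α hα => (rep_and_int hγ1 hγ2 hα.1 hα.2).2
  · intro α hα
    obtain ⟨hint, hrep⟩ := rep_and_int hγ1 hγ2 hα.1 hα.2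
    have : (∫ z, stf γ α z) = ∫ z in Ioo (-1:ℝ) 1, stg γ α z := hrep
    show (∫ z, stf γ α z) < 0
    rw [this]
    have hnegint : IntegrableOn (fun z => -stg γ α z) (Ioo (-1:ℝ) 1) := hint.neg
    have hnonneg : 0 ≤ᵐ[volume.restrict (Ioo (-1:ℝ) 1)] fun z => -stg γ α z := by
      filter_upwards [ae_restrict_mem measurableSet_Ioo] with w hw
      have := stg_neg hγ1 hγ2 hα.1 hα.2 w hw
      simp only [Pi.zero_apply]
      linarith
    have hneg : 0 < ∫ z in Ioo (-1:ℝ) 1, -stg γ α z := by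
      rw [setIntegral_pos_iff_support_of_nonneg_ae hnonneg hnegint]
      have h1 : (0 : ENNReal) < volume (Ioo (-1:ℝ) 1) := by
        rw [Real.volume_Ioo]; norm_num
      have h2 : Ioo (-1:ℝ) 1
          ⊆ (Function.support fun z => -stg γ α z) ∩ Ioo (-1:ℝ) 1 := by
        intro x hx
        refine ⟨?_, hx⟩
        simp only [Function.mem_support, neg_ne_zero]
        exact ne_of_lt (stg_neg hγ1 hγ2 hα.1 hα.2 x hx)
      exact lt_of_lt_of_le h1 (measure_mono h2)
    rw [integral_neg] at hneg
    linarith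
  · intro a ha b hb hab
    have hsum : -1 + 2*γ + b + a < 0 := by
      have := ha.2; have := hb.2; linarith
    have ha' : a ∈ Ioo (0:ℝ) (1 - 2*γ) := ⟨ha.1, by have := ha.2; linarith⟩
    have hb' : b ∈ Ioo (0:ℝ) (1 - 2*γ) := ⟨lt_trans ha.1 hab, by have := hb.2; linarith⟩
    show (∫ z, stf γ b z) < ∫ z, stf γ a z
    refine key_lt hγ1 hγ2 hb' ha' ?_
    intro w hw hw0
    have hr0 : 0 < |w| := abs_pos.mpr hw0
    have hr1 : |w| < 1 := abs_lt.mpr ⟨hw.1, hw.2⟩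
    have hD : 0 < |1 - w| := abs_pos.mpr (sub_ne_zero_of_ne (ne_of_gt hw.2))
    have hDp : 0 < |1 - w| ^ (1 + 2*γ) := rpow_pos_of_pos hD _
    have hdiff := stg_diff (γ := γ) (α₁ := a) (α₂ := b) w hw hw0
    have hf1 : |w| ^ (-a) < |w| ^ (-b) :=
      rpow_lt_rpow_of_exponent_gt hr0 hr1 (by linarith)
    have hf2 : 1 < |w| ^ (-1 + 2*γ + a + b) :=
      (one_lt_rpow_iff_of_pos hr0).mpr (Or.inr ⟨hr1, by linarith⟩)
    have : 0 < stg γ a w - stg γ b w := by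
      rw [hdiff]
      exact div_pos (mul_pos_of_neg_of_neg (by linarith) (by linarith)) hDp
    linarith
  · intro a ha b hb hab
    have hsum : 0 < -1 + 2*γ + a + b := by
      have := ha.1; have := hb.1; linarith
    have ha' : a ∈ Ioo (0:ℝ) (1 - 2*γ) := ⟨by have := ha.1; linarith, by have := hb.2; linarith⟩
    have hb' : b ∈ Ioo (0:ℝ) (1 - 2*γ) := ⟨by have := hb.1; linarith, hb.2⟩
    show (∫ z, stf γ a z) < ∫ z, stf γ b z
    refine key_lt hγ1 hγ2 ha' hb' ?_
    intro w hw hw0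
    have hr0 : 0 < |w| := abs_pos.mpr hw0
    have hr1 : |w| < 1 := abs_lt.mpr ⟨hw.1, hw.2⟩
    have hD : 0 < |1 - w| := abs_pos.mpr (sub_ne_zero_of_ne (ne_of_gt hw.2))
    have hDp : 0 < |1 - w| ^ (1 + 2*γ) := rpow_pos_of_pos hD _
    have hdiff := stg_diff (γ := γ) (α₁ := b) (α₂ := a) w hw hw0
    have hf1 : |w| ^ (-a) < |w| ^ (-b) :=
      rpow_lt_rpow_of_exponent_gt hr0 hr1 (by linarith)
    have hf2 : |w| ^ (-1 + 2*γ + b + a) < 1 :=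
      rpow_lt_one hr0.le hr1 (by linarith)
    have : 0 < stg γ b w - stg γ a w := by
      rw [hdiff]
      exact div_pos (mul_pos (by linarith) (by linarith)) hDp
    linarith
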